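/- Let u be a nonprincipal ultrafilter on ℕ, let (X_n, B_n, μ_n) be a sequence of probability spaces, and for each n let g_n be a measure-preserving bijection of (X_n, μ_n). Then the map T : X_u → X_u defined by T([x_n]_u) := [g_n x_n]_u is a well-defined measure-preserving bijection of the Loeb measure space (X_u, B_u, μ_u); moreover, if (h_n) is another such sequence with induced map S, then δ_u(T, S) := μ_u({z ∈ X_u : T z ≠ S z}) = lim_u μ_n({x ∈ X_n : g_n x ≠ h_n x}). Consequently the metric ultraproduct of the groups of measure-preserving automorphisms of (X_n, μ_n), each with the uniform metric δ(R,Q) = μ({x : Rx ≠ Qx}), embeds isometrically into the group of measure-preserving automorphisms of (X_u, μ_u) with its uniform metric. -/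

import Mathlib

/-
The internal sets `[E_n]_u` are Loeb measurable with `θ [E_n]_u = lim_u μ_n (E_n)`: the upper
bound is the trivial cover, and the lower bound is countable saturation of the ultraproduct —
a countable cover of an internal set by internal sets has a finite subcover, which along `u`
is a finite cover of `E_n`. Since `g_n` is measure preserving, `T⁻¹ [B_n]_u = [g_n⁻¹ B_n]_u`
has the same `u`-limit measure, so `θ (T⁻¹ A) ≤ θ A` for every `A`. For a Loeb measurable `A`,
applying this to `A` and `Aᶜ` and using `θ A + θ Aᶜ = 1 ≤ θ (T⁻¹ A) + θ (T⁻¹ Aᶜ)` forces both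
equalities, and a set whose outer measure splits additively with its complement is measurable
because `θ` is regular. Finally `{z | T z ≠ S z} = [{x | g_n x ≠ h_n x}]_u`.
-/

open MeasureTheory Filter Topology
open scoped ENNReal symmDiff



/-! Ultraproducts of sets and the Loeb outer measure. -/

/-- The equivalence relation on `∀ n, X n` identifying sequences that agree
`u`-almost everywhere. -/
def uRel (u : Ultrafilter ℕ) {X : ℕ → Type*} (x y : ∀ n, X n) : Prop :=
  ∀ᶠ n in (u : Filter ℕ), x n = y n

/-- The (set-theoretic) ultraproduct of the family `X n` with respect to the
ultrafilter `u`: the quotient of `∀ n, X n` by the relation identifying sequences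
which agree `u`-almost everywhere. -/
def UProd (u : Ultrafilter ℕ) (X : ℕ → Type*) : Type _ :=
  Quot (uRel u (X := X))

/-- The class `[x_n]_u` of a sequence in the ultraproduct. -/
def uMk (u : Ultrafilter ℕ) {X : ℕ → Type*} (x : ∀ n, X n) : UProd u X :=
  Quot.mk _ x

/-- The subset `[A_n]_u` of the ultraproduct determined by a sequence of subsets
`A n ⊆ X n`: the set of classes of sequences which belong to `A n` for `u`-almost
every `n`. -/
def uSet (u : Ultrafilter ℕ) {X : ℕ → Type*} (A : ∀ n, Set (X n)) : Set (UProd u X) :=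
  {z | ∃ x : ∀ n, X n, uMk u x = z ∧ ∀ᶠ n in (u : Filter ℕ), x n ∈ A n}

/-- The limit of a sequence of extended nonnegative reals along the ultrafilter `u`
(it always exists since `ℝ≥0∞` is a compact Hausdorff space). -/
noncomputable def ulim (u : Ultrafilter ℕ) (f : ℕ → ℝ≥0∞) : ℝ≥0∞ :=
  (u.map f).lim

/-- The Loeb outer measure `θ` on the ultraproduct: the infimum, over countable
covers of `A` by sets of the form `[B^i_n]_u` with all `B^i_n` measurable, of
`∑ᵢ lim_u μ_n (B^i_n)`. -/
noncomputable def loebOuter (u : Ultrafilter ℕ) {X : ℕ → Type*}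
    [∀ n, MeasurableSpace (X n)] (μ : ∀ n, Measure (X n)) (A : Set (UProd u X)) : ℝ≥0∞ :=
  ⨅ (B : ℕ → ∀ n, Set (X n)) (_ : (∀ i n, MeasurableSet (B i n)) ∧
      A ⊆ ⋃ i, uSet u (B i)), ∑' i, ulim u fun n => μ n (B i n)

/-- Carathéodory measurability with respect to the Loeb outer measure. -/
def LoebMeasurable (u : Ultrafilter ℕ) {X : ℕ → Type*}
    [∀ n, MeasurableSpace (X n)] (μ : ∀ n, Measure (X n)) (A : Set (UProd u X)) : Prop :=
  ∀ S : Set (UProd u X), loebOuter u μ (S ∩ A) + loebOuter u μ (S \ A) ≤ loebOuter u μ S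

/-- The map on the ultraproduct induced by a sequence of maps `g n : X n → X n`. -/
def uMap (u : Ultrafilter ℕ) {X : ℕ → Type*} (g : ∀ n, X n → X n) :
    UProd u X → UProd u X :=
  Quot.lift (fun x => uMk u fun n => g n (x n))
    (fun x y h => Quot.sound (h.mono fun n hn => by simpa using congrArg (g n) hn))

open Set

namespace MeasureTheory.OuterMeasure

variable {α : Type*} (m : OuterMeasure α)

theorem isCaratheodory_of_measure_eq_zero {s : Set α} (hs : m s = 0) : m.IsCaratheodory s :=
  (isCaratheodory_iff_le' m).2 fun t => by
    rw [measure_mono_null inter_subset_right hs, zero_add]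
    exact measure_mono sdiff_subset

theorem isCaratheodory_of_add_compl_le (hm : @trim α m.caratheodory m = m)
    (hfin : m univ ≠ ⊤) {s : Set α} (hs : m s + m sᶜ ≤ m univ) : m.IsCaratheodory s := by
  let := m.caratheodory
  obtain ⟨t, hst, ht, hmt⟩ := m.exists_measurable_superset_eq_trim s
  rw [hm] at hmt
  have ht : m.IsCaratheodory t := ht
  have hfin' : ∀ r, m r ≠ ⊤ := fun r => ne_top_of_le_ne_top hfin (measure_mono (subset_univ r))
  -- the hull `t` exceeds `s` only by a null set
  have hnull : m (sᶜ ∩ t) = 0 := by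
    have hcompl : m sᶜ = m (sᶜ ∩ t) + m tᶜ := by
      rw [ht sᶜ, sdiff_eq, inter_eq_right.2 (compl_subset_compl.2 hst)]
    have huniv : m univ = m t + m tᶜ := by simpa [compl_eq_univ_sdiff] using ht univ
    rw [hcompl, ← hmt, huniv] at hs
    have hle : m (sᶜ ∩ t) + m tᶜ ≤ 0 + m tᶜ :=
      (ENNReal.add_le_add_iff_left (hfin' t)).1 hs |>.trans_eq (zero_add _).symm
    exact nonpos_iff_eq_zero.1 (ENNReal.le_of_add_le_add_right (hfin' tᶜ) hle)
  have hs_eq : s = t \ (sᶜ ∩ t) := by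
    rw [inter_comm, sdiff_self_inter, sdiff_compl, inter_eq_right.2 hst]
  rw [hs_eq]
  exact m.isCaratheodory_sdiff ht (m.isCaratheodory_of_measure_eq_zero hnull)

theorem isCaratheodory_preimage_and_measure_preimage_eq (hm : @trim α m.caratheodory m = m)
    (hfin : m univ ≠ ⊤) {f : α → α} (hf : ∀ s, m (f ⁻¹' s) ≤ m s) {s : Set α}
    (hs : m.IsCaratheodory s) : m.IsCaratheodory (f ⁻¹' s) ∧ m (f ⁻¹' s) = m s := by
  have hsplit : m univ = m s + m sᶜ := by simpa [compl_eq_univ_sdiff] using hs univ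
  have hcover : m univ ≤ m (f ⁻¹' s) + m (f ⁻¹' s)ᶜ := by
    simpa using measure_union_le (μ := m) (f ⁻¹' s) (f ⁻¹' s)ᶜ
  have hpre : m (f ⁻¹' s) + m (f ⁻¹' s)ᶜ ≤ m s + m sᶜ := add_le_add (hf s) (hf sᶜ)
  refine ⟨m.isCaratheodory_of_add_compl_le hm hfin (hsplit ▸ hpre), le_antisymm (hf s) ?_⟩
  have hcompl : m sᶜ ≠ ⊤ := ne_top_of_le_ne_top hfin (measure_mono (subset_univ _))
  refine (ENNReal.add_le_add_iff_right hcompl).1 ?_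
  calc m s + m sᶜ ≤ m (f ⁻¹' s) + m (f ⁻¹' s)ᶜ := hsplit ▸ hcover
    _ ≤ m (f ⁻¹' s) + m sᶜ := add_le_add le_rfl (hf sᶜ)

end MeasureTheory.OuterMeasure

section UltrafilterLimit

variable (u : Ultrafilter ℕ)

theorem tendsto_ulim (f : ℕ → ℝ≥0∞) : Tendsto f u (𝓝 (ulim u f)) :=
  (u.map f).le_nhds_lim

theorem ulim_eq_of_tendsto {f : ℕ → ℝ≥0∞} {a : ℝ≥0∞} (h : Tendsto f u (𝓝 a)) :
    ulim u f = a :=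
  tendsto_nhds_unique (tendsto_ulim u f) h

theorem ulim_const (a : ℝ≥0∞) : ulim u (fun _ => a) = a :=
  ulim_eq_of_tendsto u tendsto_const_nhds

theorem ulim_add (f g : ℕ → ℝ≥0∞) : ulim u (fun n => f n + g n) = ulim u f + ulim u g :=
  ulim_eq_of_tendsto u ((tendsto_ulim u f).add (tendsto_ulim u g))

theorem ulim_finset_sum {ι : Type*} (s : Finset ι) (f : ι → ℕ → ℝ≥0∞) :
    ulim u (fun n => ∑ i ∈ s, f i n) = ∑ i ∈ s, ulim u (f i) :=
  ulim_eq_of_tendsto u (tendsto_finsetSum s fun i _ => tendsto_ulim u (f i))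

theorem ulim_mono {f g : ℕ → ℝ≥0∞} (h : ∀ᶠ n in (u : Filter ℕ), f n ≤ g n) :
    ulim u f ≤ ulim u g :=
  le_of_tendsto_of_tendsto (tendsto_ulim u f) (tendsto_ulim u g) h

end UltrafilterLimit

section Ultraproduct

variable {u : Ultrafilter ℕ} {X : ℕ → Type*}

theorem uMk_surjective : Function.Surjective (uMk (X := X) u) :=
  fun z => Quot.exists_rep z

theorem uRel_equivalence : Equivalence (uRel (X := X) u) :=
  ⟨fun _ => .of_forall fun _ => rfl, fun h => h.mono fun _ => Eq.symm,
    fun h₁ h₂ => h₁.and h₂ |>.mono fun _ h => h.1.trans h.2⟩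

theorem uMk_eq_uMk_iff {x y : ∀ n, X n} :
    uMk u x = uMk u y ↔ ∀ᶠ n in (u : Filter ℕ), x n = y n :=
  ⟨fun h => uRel_equivalence.eqvGen_iff.1 (Quot.eqvGen_exact h), fun h => Quot.sound h⟩

theorem uMk_mem_uSet {A : ∀ n, Set (X n)} {x : ∀ n, X n} :
    uMk u x ∈ uSet u A ↔ ∀ᶠ n in (u : Filter ℕ), x n ∈ A n := by
  refine ⟨fun ⟨y, hyx, hy⟩ => ?_, fun hx => ⟨x, rfl, hx⟩⟩
  exact (uMk_eq_uMk_iff.1 hyx).and hy |>.mono fun n h => h.1 ▸ h.2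

theorem uMap_uMk (g : ∀ n, X n → X n) (x : ∀ n, X n) :
    uMap u g (uMk u x) = uMk u fun n => g n (x n) :=
  rfl

theorem uSet_univ : uSet u (fun n => (univ : Set (X n))) = univ :=
  eq_univ_of_forall fun z => by
    obtain ⟨x, rfl⟩ := uMk_surjective z
    exact uMk_mem_uSet.2 (.of_forall fun _ => mem_univ _)

theorem uSet_inter (A B : ∀ n, Set (X n)) :
    uSet u (fun n => A n ∩ B n) = uSet u A ∩ uSet u B := by
  ext z
  obtain ⟨x, rfl⟩ := uMk_surjective z
  simp only [mem_inter_iff, uMk_mem_uSet, eventually_and]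

theorem uSet_sdiff (A B : ∀ n, Set (X n)) :
    uSet u (fun n => A n \ B n) = uSet u A \ uSet u B := by
  ext z
  obtain ⟨x, rfl⟩ := uMk_surjective z
  simp only [Set.mem_sdiff, uMk_mem_uSet, eventually_and, Ultrafilter.eventually_not]

theorem preimage_uMap_uSet (g : ∀ n, X n → X n) (B : ∀ n, Set (X n)) :
    uMap u g ⁻¹' uSet u B = uSet u fun n => g n ⁻¹' B n := by
  ext z
  obtain ⟨x, rfl⟩ := uMk_surjective z
  rw [mem_preimage, uMap_uMk, uMk_mem_uSet, uMk_mem_uSet]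
  rfl

theorem setOf_uMap_ne_uMap (g h : ∀ n, X n → X n) :
    {z : UProd u X | uMap u g z ≠ uMap u h z} = uSet u fun n => {x | g n x ≠ h n x} := by
  ext z
  obtain ⟨x, rfl⟩ := uMk_surjective z
  simp only [mem_ofPred_eq, uMap_uMk, ne_eq, uMk_eq_uMk_iff, uMk_mem_uSet,
    Ultrafilter.eventually_not]

theorem uMap_bijective {g : ∀ n, X n → X n} (hg : ∀ n, Function.Bijective (g n)) :
    Function.Bijective (uMap u g) := by
  refine ⟨fun a b hab => ?_, fun b => ?_⟩
  · obtain ⟨x, rfl⟩ := uMk_surjective a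
    obtain ⟨y, rfl⟩ := uMk_surjective b
    exact uMk_eq_uMk_iff.2 ((uMk_eq_uMk_iff.1 hab).mono fun n h => (hg n).1 h)
  · obtain ⟨y, rfl⟩ := uMk_surjective b
    choose x hx using fun n => (hg n).2 (y n)
    exact ⟨uMk u x, congrArg (uMk u) (funext hx)⟩

theorem exists_eventually_subset_biUnion_of_uSet_subset (hu : (u : Filter ℕ) ≤ cofinite)
    [∀ n, Nonempty (X n)] {E : ∀ n, Set (X n)} {B : ℕ → ∀ n, Set (X n)}
    (hEB : uSet u E ⊆ ⋃ i, uSet u (B i)) :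
    ∃ k, ∀ᶠ n in (u : Filter ℕ), E n ⊆ ⋃ i ∈ Finset.range k, B i n := by
  classical
  by_contra! hne
  set C : ℕ → ∀ n, Set (X n) := fun k n => ⋃ i ∈ Finset.range k, B i n
  have hC : ∀ k, ∀ᶠ n in (u : Filter ℕ), ¬E n ⊆ C k n := hne
  -- Diagonalise: at stage `n`, stay outside the largest `C k n` with `k ≤ n` not covering `E n`.
  set f : ℕ → ℕ := fun n => Nat.findGreatest (fun k => ¬E n ⊆ C k n) n
  have hf : ∀ᶠ n in (u : Filter ℕ), ¬E n ⊆ C (f n) n :=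
    (hC 0).mono fun n h => Nat.findGreatest_spec (P := fun k => ¬E n ⊆ C k n) (Nat.zero_le n) h
  set x : ∀ n, X n := fun n =>
    if h : ¬E n ⊆ C (f n) n then (not_subset.1 h).choose else Classical.arbitrary _
  have hx : ∀ᶠ n in (u : Filter ℕ), x n ∈ E n ∧ x n ∉ C (f n) n :=
    hf.mono fun n h => by simpa only [x, dif_pos h] using (not_subset.1 h).choose_spec
  obtain ⟨i, hi⟩ := mem_iUnion.1 (hEB (uMk_mem_uSet.2 (hx.mono fun n h => h.1)))
  have hlarge : ∀ᶠ n in (u : Filter ℕ), i + 1 ≤ n :=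
    hu (Nat.cofinite_eq_atTop ▸ eventually_ge_atTop (i + 1))
  obtain ⟨n, hxB, hxC, hCn, hn⟩ :=
    ((uMk_mem_uSet.1 hi).and (hx.and ((hC (i + 1)).and hlarge))).exists
  exact hxC.2 (mem_biUnion (Finset.mem_range.2 (Nat.le_findGreatest hn hCn)) hxB)

end Ultraproduct

section Loeb

variable {u : Ultrafilter ℕ} {X : ℕ → Type*} [∀ n, MeasurableSpace (X n)]
  (μ : ∀ n, Measure (X n))

theorem loebOuter_le_tsum {A : Set (UProd u X)} {B : ℕ → ∀ n, Set (X n)}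
    (hB : ∀ i n, MeasurableSet (B i n)) (hAB : A ⊆ ⋃ i, uSet u (B i)) :
    loebOuter u μ A ≤ ∑' i, ulim u fun n => μ n (B i n) :=
  iInf₂_le B ⟨hB, hAB⟩

theorem loebOuter_preimage_uMap_le {g : ∀ n, X n → X n}
    (hg : ∀ n, MeasurePreserving (g n) (μ n) (μ n)) (A : Set (UProd u X)) :
    loebOuter u μ (uMap u g ⁻¹' A) ≤ loebOuter u μ A := by
  refine le_iInf₂ fun B ⟨hB, hAB⟩ => ?_
  have hcover : uMap u g ⁻¹' A ⊆ ⋃ i, uSet u fun n => g n ⁻¹' B i n := by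
    simpa only [preimage_iUnion, preimage_uMap_uSet] using preimage_mono (f := uMap u g) hAB
  refine (loebOuter_le_tsum μ (fun i n => (hg n).measurable (hB i n)) hcover).trans_eq ?_
  simp only [(hg _).measure_preimage (hB _ _).nullMeasurableSet]

variable (u) in
noncomputable def loebPremeasure (A : Set (UProd u X)) : ℝ≥0∞ :=
  ⨅ (B : ∀ n, Set (X n)) (_ : (∀ n, MeasurableSet (B n)) ∧ A ⊆ uSet u B),
    ulim u fun n => μ n (B n)

theorem loebPremeasure_empty : loebPremeasure u μ ∅ = 0 :=
  nonpos_iff_eq_zero.1 <| (iInf₂_le (fun _ => ∅) ⟨fun _ => .empty, empty_subset _⟩).trans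
    (by simp only [measure_empty, ulim_const, le_refl])

variable (u) in
noncomputable def loebOuterMeasure : OuterMeasure (UProd u X) :=
  OuterMeasure.ofFunction (loebPremeasure u μ) (loebPremeasure_empty μ)

theorem loebOuter_le_tsum_loebPremeasure {A : Set (UProd u X)} {S : ℕ → Set (UProd u X)}
    (hAS : A ⊆ ⋃ i, S i) : loebOuter u μ A ≤ ∑' i, loebPremeasure u μ (S i) := by
  refine ENNReal.le_of_forall_pos_le_add fun ε hε hfin => ?_
  obtain ⟨δ, hδ, hδε⟩ := ENNReal.exists_pos_sum_of_countable (ENNReal.coe_ne_zero.2 hε.ne') ℕ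
  have hB : ∀ i, ∃ B : ∀ n, Set (X n), ((∀ n, MeasurableSet (B n)) ∧ S i ⊆ uSet u B) ∧
      (ulim u fun n => μ n (B n)) < loebPremeasure u μ (S i) + δ i := by
    intro i
    have hlt := ENNReal.lt_add_right (ENNReal.ne_top_of_tsum_ne_top hfin.ne i)
      (ENNReal.coe_ne_zero.2 (hδ i).ne')
    simpa only [loebPremeasure, iInf_lt_iff, exists_prop] using hlt
  choose B hB hBlt using hB
  calc loebOuter u μ A ≤ ∑' i, ulim u fun n => μ n (B i n) :=
        loebOuter_le_tsum μ (fun i => (hB i).1)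
          (hAS.trans (iUnion_mono fun i => (hB i).2))
    _ ≤ ∑' i, (loebPremeasure u μ (S i) + δ i) := ENNReal.tsum_le_tsum fun i => (hBlt i).le
    _ = ∑' i, loebPremeasure u μ (S i) + ∑' i, (δ i : ℝ≥0∞) := ENNReal.tsum_add
    _ ≤ ∑' i, loebPremeasure u μ (S i) + ε := add_le_add le_rfl hδε.le

theorem coe_loebOuterMeasure : ⇑(loebOuterMeasure u μ) = loebOuter u μ := by
  funext A
  rw [loebOuterMeasure, OuterMeasure.ofFunction_apply]
  refine le_antisymm ?_ ?_
  · refine le_iInf₂ fun B ⟨hB, hAB⟩ => (iInf₂_le (fun i => uSet u (B i)) hAB).trans ?_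
    exact ENNReal.tsum_le_tsum fun i => iInf₂_le (B i) ⟨hB i, subset_rfl⟩
  · exact le_iInf₂ fun S hAS => loebOuter_le_tsum_loebPremeasure μ hAS

theorem loebMeasurable_iff_isCaratheodory {A : Set (UProd u X)} :
    LoebMeasurable u μ A ↔ (loebOuterMeasure u μ).IsCaratheodory A := by
  rw [OuterMeasure.isCaratheodory_iff_le', coe_loebOuterMeasure, LoebMeasurable]

theorem isCaratheodory_uSet {E : ∀ n, Set (X n)} (hE : ∀ n, MeasurableSet (E n)) :
    (loebOuterMeasure u μ).IsCaratheodory (uSet u E) := by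
  rw [OuterMeasure.isCaratheodory_iff_le', coe_loebOuterMeasure]
  refine fun S => le_iInf₂ fun C ⟨hC, hSC⟩ => ?_
  have hinter : S ∩ uSet u E ⊆ ⋃ i, uSet u fun n => C i n ∩ E n := by
    simpa only [uSet_inter, ← iUnion_inter] using inter_subset_inter_left _ hSC
  have hdiff : S \ uSet u E ⊆ ⋃ i, uSet u fun n => C i n \ E n := by
    simpa only [uSet_sdiff, ← iUnion_sdiff] using sdiff_subset_sdiff_left hSC
  calc loebOuter u μ (S ∩ uSet u E) + loebOuter u μ (S \ uSet u E)
      ≤ (∑' i, ulim u fun n => μ n (C i n ∩ E n)) + ∑' i, ulim u fun n => μ n (C i n \ E n) :=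
        add_le_add (loebOuter_le_tsum μ (fun i n => (hC i n).inter (hE n)) hinter)
          (loebOuter_le_tsum μ (fun i n => (hC i n).diff (hE n)) hdiff)
    _ = ∑' i, ulim u fun n => μ n (C i n) := by
        simp only [← ENNReal.tsum_add, ← ulim_add, measure_inter_add_sdiff _ (hE _)]

theorem loebOuter_uSet_le {E : ∀ n, Set (X n)} (hE : ∀ n, MeasurableSet (E n)) :
    loebOuter u μ (uSet u E) ≤ ulim u fun n => μ n (E n) := by
  rw [← coe_loebOuterMeasure]
  exact (OuterMeasure.ofFunction_le _).trans (iInf₂_le E ⟨hE, subset_rfl⟩)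

theorem loebOuter_uSet (hu : (u : Filter ℕ) ≤ cofinite) [∀ n, Nonempty (X n)]
    {E : ∀ n, Set (X n)} (hE : ∀ n, MeasurableSet (E n)) :
    loebOuter u μ (uSet u E) = ulim u fun n => μ n (E n) := by
  refine le_antisymm (loebOuter_uSet_le μ hE) (le_iInf₂ fun B ⟨_, hEB⟩ => ?_)
  obtain ⟨k, hk⟩ := exists_eventually_subset_biUnion_of_uSet_subset hu hEB
  calc (ulim u fun n => μ n (E n)) ≤ ulim u fun n => ∑ i ∈ Finset.range k, μ n (B i n) :=
        ulim_mono u (hk.mono fun n h => (measure_mono h).trans (measure_biUnion_finset_le _ _))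
    _ = ∑ i ∈ Finset.range k, ulim u fun n => μ n (B i n) := ulim_finset_sum u _ _
    _ ≤ ∑' i, ulim u fun n => μ n (B i n) := ENNReal.sum_le_tsum _

theorem loebOuter_univ_le_one [∀ n, IsProbabilityMeasure (μ n)] :
    loebOuter u μ univ ≤ 1 := by
  simpa only [uSet_univ, measure_univ, ulim_const] using
    loebOuter_uSet_le (u := u) μ fun _ => MeasurableSet.univ

/-- Regularity of the Loeb outer measure: countable unions of internal sets are Loeb measurable. -/
theorem trim_loebOuterMeasure :
    @OuterMeasure.trim _ (loebOuterMeasure u μ).caratheodory (loebOuterMeasure u μ) =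
      loebOuterMeasure u μ := by
  let := (loebOuterMeasure u μ).caratheodory
  refine le_antisymm (fun A => ?_) (OuterMeasure.le_trim _)
  rw [OuterMeasure.trim_eq_iInf, coe_loebOuterMeasure]
  refine le_iInf₂ fun B ⟨hB, hAB⟩ => ?_
  have hmeas : MeasurableSet (⋃ i, uSet u (B i)) :=
    .iUnion fun i => isCaratheodory_uSet μ (hB i)
  exact (iInf₂_le _ hAB).trans ((iInf_le _ hmeas).trans (loebOuter_le_tsum μ hB subset_rfl))

end Loeb

theorem loeb_automorphism_ultraproduct_general (u : Ultrafilter ℕ)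
    (hu : (u : Filter ℕ) ≤ Filter.cofinite)
    {X : ℕ → Type*} [∀ n, MeasurableSpace (X n)]
    (μ : ∀ n, Measure (X n)) [∀ n, IsProbabilityMeasure (μ n)]
    (g h : ∀ n, X n → X n)
    (hgm : ∀ n, MeasurePreserving (g n) (μ n) (μ n)) (hgb : ∀ n, Function.Bijective (g n))
    (hgh : ∀ n, MeasurableSet {x : X n | g n x ≠ h n x}) :
    Function.Bijective (uMap u g) ∧
    (∀ A : Set (UProd u X), LoebMeasurable u μ A →
      LoebMeasurable u μ (uMap u g ⁻¹' A) ∧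
        loebOuter u μ (uMap u g ⁻¹' A) = loebOuter u μ A) ∧
    LoebMeasurable u μ {z : UProd u X | uMap u g z ≠ uMap u h z} ∧
    loebOuter u μ {z : UProd u X | uMap u g z ≠ uMap u h z} =
      ulim u fun n => μ n {x : X n | g n x ≠ h n x} := by
  have : ∀ n, Nonempty (X n) := fun n => nonempty_of_isProbabilityMeasure (μ n)
  have hfin : loebOuterMeasure u μ univ ≠ ⊤ := by
    rw [coe_loebOuterMeasure]
    exact ne_top_of_le_ne_top ENNReal.one_ne_top (loebOuter_univ_le_one μ)
  refine ⟨uMap_bijective hgb, fun A hA => ?_, ?_, ?_⟩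
  · simp only [loebMeasurable_iff_isCaratheodory, ← coe_loebOuterMeasure] at hA ⊢
    refine (loebOuterMeasure u μ).isCaratheodory_preimage_and_measure_preimage_eq
      (trim_loebOuterMeasure μ) hfin (fun S => ?_) hA
    simpa only [coe_loebOuterMeasure] using loebOuter_preimage_uMap_le μ hgm S
  · rw [setOf_uMap_ne_uMap, loebMeasurable_iff_isCaratheodory]
    exact isCaratheodory_uSet μ hgh
  · rw [setOf_uMap_ne_uMap]
    exact loebOuter_uSet μ hu hgh

/-- A sequence of measure-preserving bijections `g n` of `(X n, μ n)`
induces (via `T [x_n]_u = [g n (x_n)]_u`, well defined by construction of `uMap`) a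
measure-preserving bijection of the Loeb space; moreover for two such sequences
`g, h` the uniform distance of the induced maps equals
`lim_u μ_n {x | g n x ≠ h n x}`.  This realises the isometric embedding of the
metric ultraproduct of the automorphism groups `Aut (X n, μ n)` (with their uniform
metrics) into the automorphism group of the Loeb space. -/
theorem loeb_automorphism_ultraproduct (u : Ultrafilter ℕ)
    (hu : (u : Filter ℕ) ≤ Filter.cofinite)
    {X : ℕ → Type*} [∀ n, MeasurableSpace (X n)]
    (μ : ∀ n, Measure (X n)) [∀ n, IsProbabilityMeasure (μ n)]
    (g h : ∀ n, X n → X n)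
    (hgm : ∀ n, MeasurePreserving (g n) (μ n) (μ n)) (hgb : ∀ n, Function.Bijective (g n))
    (hhm : ∀ n, MeasurePreserving (h n) (μ n) (μ n)) (hhb : ∀ n, Function.Bijective (h n))
    (hgh : ∀ n, MeasurableSet {x : X n | g n x ≠ h n x}) :
    Function.Bijective (uMap u g) ∧
    (∀ A : Set (UProd u X), LoebMeasurable u μ A →
      LoebMeasurable u μ (uMap u g ⁻¹' A) ∧
        loebOuter u μ (uMap u g ⁻¹' A) = loebOuter u μ A) ∧
    LoebMeasurable u μ {z : UProd u X | uMap u g z ≠ uMap u h z} ∧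
    loebOuter u μ {z : UProd u X | uMap u g z ≠ uMap u h z} =
      ulim u fun n => μ n {x : X n | g n x ≠ h n x} :=
  loeb_automorphism_ultraproduct_general u hu μ g h hgm hgb hgh
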